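/- arXiv:1812.06872 — 2 statements merged into one kernel-verified Lean document; each statement's English description precedes it below -/
import Mathlib

section
/- Let R be a star-ordered ring, let p ∈ R with 0 ≤ p, let n be a positive integer, and let t₁, …, tₙ ∈ R. Set t := t₁ + ⋯ + tₙ. Then t* p t ≤ 2^{n−1} · (t₁* p t₁ + ⋯ + tₙ* p tₙ), where 2^{n−1} denotes the natural-number scalar multiple. -/
/-!
Expanding `0 ≤ (a - b)* p (a - b)` bounds the cross terms `a* p b + b* p a` by the diagonal
terms `a* p a + b* p b`. Adding the `tᵢ` one at a time and bounding each new cross term this way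
gives the sharper estimate `t* p t ≤ n • ∑ tᵢ* p tᵢ`, and `n ≤ 2 ^ (n - 1)`.
-/

theorem Nat.le_two_pow_sub_one (n : ℕ) : n ≤ 2 ^ (n - 1) := by
  cases n with
  | zero => exact Nat.zero_le _
  | succ m => exact Nat.lt_two_pow_self

section

open Finset

variable {R : Type*} [NonUnitalRing R] [PartialOrder R] [StarRing R] [StarOrderedRing R]
  {p : R}

theorem star_mul_mul_add_star_mul_mul_le (hp : 0 ≤ p) (a b : R) :
    star a * p * b + star b * p * a ≤ star a * p * a + star b * p * b := by
  refine sub_nonneg.mp ?_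
  convert star_left_conjugate_nonneg hp (a - b) using 1
  simp only [star_sub]
  noncomm_ring

theorem Finset.star_sum_mul_mul_sum_le_card_nsmul {ι : Type*} (hp : 0 ≤ p) (s : Finset ι)
    (t : ι → R) :
    star (∑ i ∈ s, t i) * p * (∑ i ∈ s, t i) ≤ #s • ∑ i ∈ s, star (t i) * p * t i := by
  induction s using Finset.cons_induction with
  | empty => simp
  | cons j s hj ih =>
    rw [sum_cons]
    set S := ∑ i ∈ s, t i
    have cross : star S * p * t j + star (t j) * p * S
        ≤ ∑ i ∈ s, star (t i) * p * t i + #s • (star (t j) * p * t j) := by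
      rw [← sum_const, ← sum_add_distrib]
      simp only [S, star_sum, sum_mul, mul_sum, ← sum_add_distrib]
      exact sum_le_sum fun i _ => star_mul_mul_add_star_mul_mul_le hp (t i) (t j)
    calc star (t j + S) * p * (t j + S)
        = star S * p * S + (star S * p * t j + star (t j) * p * S) + star (t j) * p * t j := by
          simp only [star_add]
          noncomm_ring
      _ ≤ #s • ∑ i ∈ s, star (t i) * p * t i
            + (∑ i ∈ s, star (t i) * p * t i + #s • (star (t j) * p * t j))
            + star (t j) * p * t j := by gcongr
      _ = #(cons j s hj) • ∑ i ∈ cons j s hj, star (t i) * p * t i := by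
          rw [card_cons, sum_cons, succ_nsmul, nsmul_add]
          abel

end

theorem star_mul_sum_le_pow_two_smul_sum_general
    {R : Type*} [NonUnitalRing R] [PartialOrder R] [StarRing R] [StarOrderedRing R]
    (p : R) (hp : 0 ≤ p) (n : ℕ) (t : Fin n → R) :
    star (∑ i, t i) * p * (∑ i, t i) ≤ 2 ^ (n - 1) • ∑ i, star (t i) * p * t i := by
  calc star (∑ i, t i) * p * (∑ i, t i)
      ≤ n • ∑ i, star (t i) * p * t i := by
        simpa using Finset.univ.star_sum_mul_mul_sum_le_card_nsmul hp t
    _ ≤ 2 ^ (n - 1) • ∑ i, star (t i) * p * t i :=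
        nsmul_le_nsmul_left
          (Finset.sum_nonneg fun i _ => star_left_conjugate_nonneg hp (t i))
          (Nat.le_two_pow_sub_one n)

/-- Parallelogram (generalized Cauchy–Schwarz) inequality in a star-ordered ring:
for `0 ≤ p` and elements `t₁, …, tₙ` with sum `t`, one has
`t* p t ≤ 2^(n-1) • (t₁* p t₁ + ⋯ + tₙ* p tₙ)`. -/
theorem star_mul_sum_le_pow_two_smul_sum
    {R : Type*} [NonUnitalRing R] [PartialOrder R] [StarRing R] [StarOrderedRing R]
    (p : R) (hp : 0 ≤ p) (n : ℕ) (hn : 0 < n) (t : Fin n → R) :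
    star (∑ i, t i) * p * (∑ i, t i) ≤ 2 ^ (n - 1) • ∑ i, star (t i) * p * t i :=
  star_mul_sum_le_pow_two_smul_sum_general p hp n t
end

section
/- Let M be a von Neumann algebra acting on a complex Hilbert space H, and let τ : M → ℂ be a positive tracial linear functional. Let ε, δ > 0 and let A, B ∈ M be such that 0 ≤ A ≤ B and B ∈ O_τ(ε, δ). Then A ∈ O_τ(ε, 2δ). -/
/-!
Let `R = (A - ε)₊` and let `Q` project onto `ker R`. Since `A = min(A, ε) + R`, we get
`A Q = min(A, ε) Q`, so `‖A Q‖ ≤ ε`. On the range of `R` the operator `A` acts as `ε + R`; if such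
a vector `u` is fixed by `E`, then `ε ‖u‖² + ⟪R u, u⟫ = ⟪A u, u⟫ ≤ ⟪B E u, u⟫ ≤ ε ‖u‖²`, so
`R u = 0` and hence `u = 0`. Hence `ker ((1 - E) R) = ker R`, and the polar decomposition of `(1 - E) R` makes `1 - Q`
Murray–von Neumann subequivalent to `1 - E` inside `M`. The trace is monotone along
subequivalence, so `τ (1 - Q) ≤ τ (1 - E) ≤ δ`.
-/

open scoped ComplexOrder

/-- The fundamental neighborhood `O_τ(ε, δ)` of `0` for the measure topology on a
von Neumann algebra `M` with positive tracial functional `τ`: those `A ∈ M` for which there is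
a projection `E ∈ M` with `‖A E‖ ≤ ε` and `τ(1 - E) ≤ δ`. -/
def measureNbhd {H : Type*} [NormedAddCommGroup H] [InnerProductSpace ℂ H] [CompleteSpace H]
    (M : VonNeumannAlgebra H) (τ : (H →L[ℂ] H) →ₗ[ℂ] ℂ) (ε δ : ℝ) :
    Set (H →L[ℂ] H) :=
  {A | A ∈ M ∧ ∃ E : H →L[ℂ] H, E ∈ M ∧ IsIdempotentElem E ∧ IsSelfAdjoint E ∧
    ‖A * E‖ ≤ ε ∧ τ (1 - E) ≤ (δ : ℂ)}

open ContinuousLinearMap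
open scoped InnerProductSpace

section CStarAlgebra

variable {A : Type*} [CStarAlgebra A] (a : A) (ε : ℝ)

theorem cfc_min_add_cfc_max (ha : IsSelfAdjoint a) :
    cfc (fun l => min l ε) a + cfc (fun l => max (l - ε) 0) a = a := by
  rw [← cfc_add ..]
  conv_rhs => rw [← cfc_id' ℝ a]
  refine cfc_congr fun l _ => ?_
  rcases le_total l ε with h | h <;> simp [h]

theorem cfc_min_mul_cfc_max :
    cfc (fun l => min l ε) a * cfc (fun l => max (l - ε) 0) a =
      ε • cfc (fun l => max (l - ε) 0) a := by
  rw [← cfc_mul .., ← cfc_const_mul ..]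
  refine cfc_congr fun l _ => ?_
  rcases le_total l ε with h | h <;> simp [h]

theorem norm_cfc_min_le [PartialOrder A] [StarOrderedRing A] (ha : 0 ≤ a) (hε : 0 ≤ ε) :
    ‖cfc (fun l => min l ε) a‖ ≤ ε :=
  norm_cfc_le hε fun l hl => by
    rw [Real.norm_of_nonneg (le_min (spectrum_nonneg_of_nonneg ha hl) hε)]
    exact min_le_right l ε

end CStarAlgebra

/-- Murray–von Neumann subequivalence `p ≾ q` witnessed in `s`: for a projection `q`, the
condition `q * v = v` says that the final projection `v * star v` lies under `q`. -/
def MurrayVonNeumannLE {A S : Type*} [Mul A] [Star A] [SetLike S A] (s : S) (p q : A) : Prop :=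
  ∃ v ∈ s, star v * v = p ∧ q * v = v

theorem MurrayVonNeumannLE.trace_le {A S : Type*} [NormedRing A] [StarRing A] [CStarRing A]
    [Module ℂ A] [SetLike S A] [SubringClass S A] [StarMemClass S A] {s : S} {τ : A →ₗ[ℂ] ℂ}
    (hpos : ∀ a ∈ s, 0 ≤ τ (star a * a)) (htrace : ∀ a ∈ s, ∀ b ∈ s, τ (a * b) = τ (b * a))
    {p q : A} (hpq : MurrayVonNeumannLE s p q) (hp : IsIdempotentElem p)
    (hq : IsStarProjection q) (hqs : q ∈ s) : τ p ≤ τ q := by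
  obtain ⟨v, hvs, hvv, hqv⟩ := hpq
  have hp_sa : star p = p := by rw [← hvv, star_mul, star_star]
  have hvp : v * p = v := by
    rw [← sub_eq_zero, ← CStarRing.star_mul_self_eq_zero_iff]
    simp only [star_sub, star_mul, hp_sa, sub_mul, mul_sub, ← mul_assoc, hvv]
    simp only [mul_assoc, hvv, hp.eq]
    abel
  set w := v * star v
  have hw : IsIdempotentElem w := by
    rw [IsIdempotentElem, mul_assoc, ← mul_assoc (star v), hvv, ← mul_assoc, hvp]
  have hqw : q * w = w := by rw [← mul_assoc, hqv]
  have hwq : w * q = w := by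
    simpa [w, star_mul, hq.isSelfAdjoint.star_eq] using congrArg star hqw
  have hqw_proj : star (q - w) * (q - w) = q - w := by
    have hw_sa : star w = w := by simp [w, star_mul]
    rw [star_sub, hq.isSelfAdjoint.star_eq, hw_sa, sub_mul, mul_sub, mul_sub,
      hq.isIdempotentElem.eq, hqw, hwq, hw.eq]
    abel
  have hτw : τ w = τ p := by rw [← hvv]; exact htrace v hvs (star v) (star_mem hvs)
  have := hpos (q - w) (sub_mem hqs (mul_mem hvs (star_mem hvs)))
  rwa [hqw_proj, map_sub, hτw, sub_nonneg] at this

section Operators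

variable {H : Type*} [NormedAddCommGroup H] [InnerProductSpace ℂ H] [CompleteSpace H]

namespace ContinuousLinearMap

theorem forall_norm_apply_eq_iff_star_mul_self_eq {a b : H →L[ℂ] H} :
    (∀ x, ‖a x‖ = ‖b x‖) ↔ star a * a = star b * b := by
  have inner_eq (c : H →L[ℂ] H) (x : H) : ⟪(star c * c) x, x⟫_ℂ = ⟪c x, c x⟫_ℂ := by
    rw [star_eq_adjoint, mul_apply_eq_comp, adjoint_inner_left]
  constructor
  · intro h
    apply coe_injective
    rw [← ext_inner_map]
    intro x
    simp only [coe_coe, inner_eq, inner_self_eq_norm_sq_to_K, h]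
  · intro h x
    rw [← sq_eq_sq₀ (norm_nonneg _) (norm_nonneg _), @norm_sq_eq_re_inner ℂ,
      @norm_sq_eq_re_inner ℂ, ← inner_eq, ← inner_eq, h]

theorem IsSelfAdjoint.inner_mul_self_apply {s : H →L[ℂ] H} (hs : IsSelfAdjoint s) (x : H) :
    ⟪(s * s) x, x⟫_ℂ = ⟪s x, s x⟫_ℂ :=
  hs.isSymmetric (s x) x

theorem apply_eq_zero_of_re_inner_nonpos {R : H →L[ℂ] H} (hR : 0 ≤ R) {x : H}
    (h : RCLike.re ⟪R x, x⟫_ℂ ≤ 0) : R x = 0 := by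
  set s := CFC.sqrt R
  have hs : IsSelfAdjoint s := (CFC.sqrt_nonneg R).isSelfAdjoint
  have hsR : s * s = R := CFC.sqrt_mul_sqrt_self R
  rw [← hsR, hs.inner_mul_self_apply, inner_self_eq_norm_sq] at h
  have hsx : s x = 0 := norm_eq_zero.1 ((sq_nonpos_iff _).1 h)
  rw [← hsR, mul_apply_eq_comp, hsx, map_zero]

theorem apply_eq_zero_of_apply_apply_eq_zero {s : H →L[ℂ] H} (hs : IsSelfAdjoint s) {x : H}
    (h : s (s x) = 0) : s x = 0 := by
  refine (inner_self_eq_zero (𝕜 := ℂ)).1 ?_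
  rw [← hs.inner_mul_self_apply, mul_apply_eq_comp, h, inner_zero_left]

theorem norm_abs_apply (T : H →L[ℂ] H) (x : H) : ‖CFC.abs T x‖ = ‖T x‖ :=
  forall_norm_apply_eq_iff_star_mul_self_eq.2
    (by rw [(CFC.abs_nonneg T).isSelfAdjoint.star_eq, CFC.abs_mul_abs]) x

theorem mul_starProjection_ker (T : H →L[ℂ] H) : T * T.ker.starProjection = 0 :=
  ext fun x => Submodule.starProjection_apply_mem T.ker x

theorem starProjection_ker_mul_abs (T : H →L[ℂ] H) : T.ker.starProjection * CFC.abs T = 0 := by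
  have habs_mul : CFC.abs T * T.ker.starProjection = 0 := by
    ext x
    rw [zero_apply, ← norm_eq_zero, mul_apply_eq_comp, norm_abs_apply, ← mul_apply_eq_comp,
      mul_starProjection_ker, zero_apply, norm_zero]
  simpa [star_mul, (CFC.abs_nonneg T).isSelfAdjoint.star_eq,
    (isSelfAdjoint_starProjection _).star_eq] using congrArg star habs_mul

theorem starProjection_ker_mul_abs_add (T : H →L[ℂ] H) :
    T.ker.starProjection * (CFC.abs T + T.ker.starProjection) = T.ker.starProjection := by
  rw [mul_add, starProjection_ker_mul_abs, zero_add,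
    (Submodule.isIdempotentElem_starProjection _).eq]

theorem one_sub_starProjection_ker_mul_abs_add (T : H →L[ℂ] H) :
    (1 - T.ker.starProjection) * (CFC.abs T + T.ker.starProjection) = CFC.abs T := by
  rw [sub_mul, one_mul, starProjection_ker_mul_abs_add, add_sub_cancel_right]

theorem denseRange_abs_add_starProjection_ker (T : H →L[ℂ] H) :
    DenseRange (CFC.abs T + T.ker.starProjection) := by
  have he_sa : IsSelfAdjoint (CFC.abs T + T.ker.starProjection) :=
    (CFC.abs_nonneg T).isSelfAdjoint.add (isSelfAdjoint_starProjection _)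
  have he_ker : ((CFC.abs T + T.ker.starProjection : H →L[ℂ] H) : H →ₗ[ℂ] H).ker = ⊥ := by
    refine LinearMap.ker_eq_bot'.2 fun x hx => ?_
    rw [coe_coe] at hx
    have hQx : T.ker.starProjection x = 0 := by
      rw [← starProjection_ker_mul_abs_add, mul_apply_eq_comp, hx, map_zero]
    have hTx : T x = 0 := by
      rw [← norm_eq_zero, ← norm_abs_apply, ← one_sub_starProjection_ker_mul_abs_add,
        mul_apply_eq_comp, hx, map_zero, norm_zero]
    rw [← hQx, Submodule.starProjection_eq_self_iff.2 hTx]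
  change Dense (LinearMap.range
    ((CFC.abs T + T.ker.starProjection : H →L[ℂ] H) : H →ₗ[ℂ] H) : Set H)
  rw [Submodule.dense_iff_topologicalClosure_eq_top, Submodule.topologicalClosure_eq_top_iff,
    orthogonal_range, isSelfAdjoint_iff'.1 he_sa, he_ker]

end ContinuousLinearMap

namespace VonNeumannAlgebra

variable {M : VonNeumannAlgebra H}

theorem isClosed (M : VonNeumannAlgebra H) : IsClosed (M : Set (H →L[ℂ] H)) := by
  rw [← M.centralizer_centralizer]
  exact Set.isClosed_centralizer _

theorem cfc_mem {a : H →L[ℂ] H} (ha : a ∈ M) (f : ℝ → ℝ) : cfc f a ∈ M :=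
  have := M.isClosed
  _root_.cfc_mem (s := M.toStarSubalgebra) (𝕜' := ℂ) f ha

theorem abs_mem {a : H →L[ℂ] H} (ha : a ∈ M) : CFC.abs a ∈ M := by
  rw [CFC.abs, CFC.sqrt_eq_real_sqrt _ (star_mul_self_nonneg a), cfcₙ_eq_cfc]
  exact cfc_mem (mul_mem (star_mem ha) ha) _

theorem starProjection_ker_mem {a : H →L[ℂ] H} (ha : a ∈ M) : a.ker.starProjection ∈ M := by
  rw [IsStarProjection.mem_iff isStarProjection_starProjection M]
  intro y hy
  rw [Submodule.range_starProjection, Module.End.mem_invtSubmodule_iff_forall_mem_of_mem]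
  intro x hx
  rw [LinearMap.mem_ker] at hx ⊢
  simp only [coe_coe] at hx ⊢
  rw [← mul_apply_eq_comp, mem_commutant_iff.1 hy a ha, mul_apply_eq_comp, hx, map_zero]

/-- The witness is the polar part of `T`: the extension of `(|T| + Q) x ↦ T x` from the dense
range of `|T| + Q`, where `Q` projects onto `ker T`. -/
theorem murrayVonNeumannLE_one_sub_starProjection_ker {T F : H →L[ℂ] H} (hT : T ∈ M)
    (hFT : F * T = T) : MurrayVonNeumannLE M (1 - T.ker.starProjection) F := by
  set Q := T.ker.starProjection
  set e := CFC.abs T + Q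
  have he_dense : DenseRange e := denseRange_abs_add_starProjection_ker T
  have hTe (x : H) : ‖T x‖ = ‖(1 - Q) (e x)‖ := by
    rw [← mul_apply_eq_comp, one_sub_starProjection_ker_mul_abs_add, norm_abs_apply]
  have hbound (x : H) : ‖T x‖ ≤ 1 * ‖e x‖ := by
    have h1Q : 1 - Q = T.kerᗮ.starProjection := by rw [Submodule.starProjection_orthogonal]; rfl
    rw [one_mul, hTe, h1Q]
    exact Submodule.norm_starProjection_apply_le _ _
  set v : H →L[ℂ] H := (T : H →ₗ[ℂ] H).extendOfNorm (e : H →ₗ[ℂ] H)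
  have hve : v * e = T :=
    ContinuousLinearMap.ext (LinearMap.extendOfNorm_eq he_dense ⟨1, hbound⟩)
  have cancel {a b : H →L[ℂ] H} (h : a * e = b * e) : a = b :=
    DFunLike.coe_injective
      (he_dense.equalizer a.continuous b.continuous (funext fun x => congr($h x)))
  refine ⟨v, ?_, ?_, cancel (by rw [mul_assoc, hve, hFT])⟩
  · rw [← M.commutant_commutant, mem_commutant_iff]
    intro z hz
    have hze : z * e = e * z := by
      rw [mul_add, add_mul, mem_commutant_iff.1 hz _ (abs_mem hT),
        mem_commutant_iff.1 hz Q (starProjection_ker_mem hT)]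
    apply cancel
    rw [mul_assoc, hve, mul_assoc, hze, ← mul_assoc, hve, mem_commutant_iff.1 hz T hT]
  · have hQ : IsStarProjection (1 - Q) := isStarProjection_starProjection.one_sub
    have h1Q : star (1 - Q) * (1 - Q) = 1 - Q := by
      rw [hQ.isSelfAdjoint.star_eq, hQ.isIdempotentElem.eq]
    refine (forall_norm_apply_eq_iff_star_mul_self_eq.1 fun y => ?_).trans h1Q
    refine congrFun (he_dense.equalizer (g := fun y => ‖v y‖) (h := fun y => ‖(1 - Q) y‖)
      (by fun_prop) (by fun_prop) (funext fun x => ?_)) y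
    rw [Function.comp_apply, Function.comp_apply, ← mul_apply_eq_comp, hve, hTe]

end VonNeumannAlgebra

section Truncation

variable {A B E : H →L[ℂ] H} {ε : ℝ}

theorem norm_mul_starProjection_ker_cfc_max_le (hA : 0 ≤ A) (hε : 0 ≤ ε) :
    ‖A * (cfc (fun l => max (l - ε) 0) A).ker.starProjection‖ ≤ ε := by
  set R := cfc (fun l => max (l - ε) 0) A
  set C := cfc (fun l => min l ε) A
  have hA_eq : C + R = A := cfc_min_add_cfc_max A ε hA.isSelfAdjoint
  calc ‖A * R.ker.starProjection‖ = ‖C * R.ker.starProjection‖ := by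
        rw [← hA_eq, add_mul, mul_starProjection_ker, add_zero]
    _ ≤ ‖C‖ * ‖R.ker.starProjection‖ := norm_mul_le _ _
    _ ≤ ε * 1 := mul_le_mul (norm_cfc_min_le A ε hA hε) (Submodule.starProjection_norm_le _)
        (norm_nonneg _) hε
    _ = ε := mul_one ε

theorem cfc_max_sub_apply_eq_zero_of_apply_eq_self (hA : 0 ≤ A) (hAB : A ≤ B)
    (hBE : ‖B * E‖ ≤ ε) {x : H}
    (hx : E (cfc (fun l => max (l - ε) 0) A x) = cfc (fun l => max (l - ε) 0) A x) :
    cfc (fun l => max (l - ε) 0) A x = 0 := by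
  set R := cfc (fun l => max (l - ε) 0) A
  have hR : 0 ≤ R := cfc_nonneg fun l _ => le_max_right _ _
  set u := R x
  have hAu : A u = ε • u + R u := by
    conv_lhs => rw [← cfc_min_add_cfc_max A ε hA.isSelfAdjoint]
    rw [add_apply, ← mul_apply_eq_comp, cfc_min_mul_cfc_max, smul_apply]
  have hBu : RCLike.re ⟪B u, u⟫_ℂ ≤ ε * ‖u‖ ^ 2 :=
    calc RCLike.re ⟪B u, u⟫_ℂ ≤ ‖B u‖ * ‖u‖ :=
          (RCLike.re_le_norm _).trans (norm_inner_le_norm _ _)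
      _ = ‖(B * E) u‖ * ‖u‖ := by rw [mul_apply_eq_comp, hx]
      _ ≤ ε * ‖u‖ ^ 2 := by
        rw [sq, ← mul_assoc]
        gcongr
        exact (le_opNorm _ _).trans (by gcongr)
  have hAB' := ((le_def A B).1 hAB).re_inner_nonneg_left u
  rw [sub_apply, inner_sub_left, map_sub, hAu, inner_add_left, map_add,
    RCLike.real_smul_eq_coe_smul (K := ℂ), inner_smul_real_left, RCLike.smul_re,
    inner_self_eq_norm_sq] at hAB'
  have hRu : R u = 0 := apply_eq_zero_of_re_inner_nonpos hR (by linarith)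
  exact apply_eq_zero_of_apply_apply_eq_zero hR.isSelfAdjoint hRu

theorem ker_one_sub_mul_cfc_max (hA : 0 ≤ A) (hAB : A ≤ B) (hBE : ‖B * E‖ ≤ ε) :
    ((1 - E) * cfc (fun l => max (l - ε) 0) A).ker = (cfc (fun l => max (l - ε) 0) A).ker := by
  ext x
  simp only [LinearMap.mem_ker, coe_coe, mul_apply_eq_comp, sub_apply, one_apply_eq_self,
    sub_eq_zero]
  exact ⟨fun hx => cfc_max_sub_apply_eq_zero_of_apply_eq_self hA hAB hBE hx.symm,
    fun hx => by simp [hx]⟩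

end Truncation

end Operators

/-- If `0 ≤ A ≤ B` in `M` (in the sense that `A` and `B - A` are positive operators)
and `B ∈ O_τ(ε, δ)`, then `A ∈ O_τ(ε, 2δ)`. -/
theorem measureNbhd_of_le
    {H : Type*} [NormedAddCommGroup H] [InnerProductSpace ℂ H] [CompleteSpace H]
    (M : VonNeumannAlgebra H) (τ : (H →L[ℂ] H) →ₗ[ℂ] ℂ)
    (hpos : ∀ a : H →L[ℂ] H, a ∈ M → 0 ≤ τ (star a * a))
    (htrace : ∀ a ∈ M, ∀ b ∈ M, τ (a * b) = τ (b * a))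
    (ε δ : ℝ) (hε : 0 < ε) (hδ : 0 < δ)
    (A B : H →L[ℂ] H) (hAM : A ∈ M)
    (hApos : A.IsPositive) (hAB : (B - A).IsPositive)
    (hB : B ∈ measureNbhd M τ ε δ) :
    A ∈ measureNbhd M τ ε (2 * δ) := by
  obtain ⟨-, E, hEM, hE_idem, hE_sa, hBE, hτE⟩ := hB
  have hA : 0 ≤ A := (nonneg_iff_isPositive A).2 hApos
  set R := cfc (fun l => max (l - ε) 0) A
  have hRM : R ∈ M := VonNeumannAlgebra.cfc_mem hAM _
  have hF : IsStarProjection (1 - E) := IsStarProjection.one_sub ⟨hE_idem, hE_sa⟩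
  have hFM : 1 - E ∈ M := sub_mem (one_mem M) hEM
  have hmvn := VonNeumannAlgebra.murrayVonNeumannLE_one_sub_starProjection_ker
    (mul_mem hFM hRM) (by rw [← mul_assoc, hF.isIdempotentElem.eq])
  have hker : ((1 - E) * R).ker.starProjection = R.ker.starProjection := by
    congr 1
    exact ker_one_sub_mul_cfc_max hA hAB hBE
  rw [hker] at hmvn
  refine ⟨hAM, R.ker.starProjection, VonNeumannAlgebra.starProjection_ker_mem hRM,
    Submodule.isIdempotentElem_starProjection _, isSelfAdjoint_starProjection _,
    norm_mul_starProjection_ker_cfc_max_le hA hε.le, ?_⟩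
  calc τ (1 - R.ker.starProjection)
      ≤ τ (1 - E) := hmvn.trace_le hpos htrace
        isStarProjection_starProjection.one_sub.isIdempotentElem hF hFM
    _ ≤ δ := hτE
    _ ≤ ((2 * δ : ℝ) : ℂ) := by exact_mod_cast (by linarith)
end
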